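/- arXiv:2401.15056 — 2 statements merged into one kernel-verified Lean document; each statement's English description precedes it below -/
import Mathlib

section
/- Let T, N1, N2, j be integers with 0 ≤ j < N1, T+1-N1-N2 > 0, and let k = (T+1-N1-N2)(T+1-N2-j). For 0 ≤ i ≤ N1, define f(i) = k(T+1-max(i,j))/(T+1-N2-j) + k(i-min(i,j))/(T+1-N2-N1). Then f is maximized over i ∈ [0, N1] at i = N1, i.e. f(i) ≤ f(N1) = (T+1-N2-N1)(T+1-N1) + (T+1-N2-j)(N1-j) for all 0 ≤ i ≤ N1. -/
/-!
After cancelling `k`, `f i = a (T + 1 - max i j) + b (i - min i j)` with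
`a = T + 1 - N2 - N1` and `b = T + 1 - N2 - j`. Since `i - min i j = max i j - j`, this is an affine
function of `max i j` with slope `b - a = N1 - j > 0`, hence monotone in `i`.
-/

lemma mul_sub_max_add_mul_sub_min {α : Type*} [CommRing α] [LinearOrder α] (a b c x y : α) :
    a * (c - max x y) + b * (x - min x y) = a * c - b * y + (b - a) * max x y := by
  linear_combination (-b) * min_add_max x y

lemma monotone_mul_sub_max_add_mul_sub_min {α : Type*} [CommRing α] [LinearOrder α]
    [IsOrderedRing α] {a b : α} (c y : α) (hab : a ≤ b) :
    Monotone fun x => a * (c - max x y) + b * (x - min x y) := by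
  simp_rw [mul_sub_max_add_mul_sub_min]
  exact monotone_const.add ((monotone_id.max monotone_const).const_mul (sub_nonneg.2 hab))

theorem stmt1_general (T N1 N2 j : ℤ) (hjN : j < N1)
    (hpos : 0 < T + 1 - N1 - N2)
    (k : ℝ) (hk : k = ((T : ℝ) + 1 - N1 - N2) * ((T : ℝ) + 1 - N2 - j))
    (f : ℤ → ℝ)
    (hf : ∀ i : ℤ, f i =
      k * ((T : ℝ) + 1 - ((max i j : ℤ) : ℝ)) / ((T : ℝ) + 1 - N2 - j)
      + k * (((i : ℝ)) - ((min i j : ℤ) : ℝ)) / ((T : ℝ) + 1 - N2 - N1)) :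
    (∀ i : ℤ, 0 ≤ i → i ≤ N1 → f i ≤ f N1) ∧
    f N1 = ((T : ℝ) + 1 - N2 - N1) * ((T : ℝ) + 1 - N1)
      + ((T : ℝ) + 1 - N2 - j) * ((N1 : ℝ) - j) := by
  have hjN' : (j : ℝ) < N1 := by exact_mod_cast hjN
  have ha : (0 : ℝ) < T + 1 - N2 - N1 := by
    have : (0 : ℝ) < T + 1 - N1 - N2 := by exact_mod_cast hpos
    linarith
  have hb : (0 : ℝ) < T + 1 - N2 - j := by linarith
  have hf' : ∀ i : ℤ, f i = ((T : ℝ) + 1 - N2 - N1) * (T + 1 - max (i : ℝ) j)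
      + ((T : ℝ) + 1 - N2 - j) * (i - min (i : ℝ) j) := by
    intro i
    rw [hf, hk, Int.cast_max, Int.cast_min]
    field_simp
    ring
  refine ⟨fun i _ hi => ?_, ?_⟩
  · rw [hf', hf']
    exact monotone_mul_sub_max_add_mul_sub_min _ _ (by linarith) (by exact_mod_cast hi)
  · rw [hf', max_eq_left hjN'.le, min_eq_right hjN'.le]

/-- the relay packet-length bound f(i) is maximized at i = N1. -/
theorem stmt1 (T N1 N2 j : ℤ) (hj : 0 ≤ j) (hjN : j < N1)
    (hpos : 0 < T + 1 - N1 - N2)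
    (k : ℝ) (hk : k = ((T : ℝ) + 1 - N1 - N2) * ((T : ℝ) + 1 - N2 - j))
    (f : ℤ → ℝ)
    (hf : ∀ i : ℤ, f i =
      k * ((T : ℝ) + 1 - ((max i j : ℤ) : ℝ)) / ((T : ℝ) + 1 - N2 - j)
      + k * (((i : ℝ)) - ((min i j : ℤ) : ℝ)) / ((T : ℝ) + 1 - N2 - N1)) :
    (∀ i : ℤ, 0 ≤ i → i ≤ N1 → f i ≤ f N1) ∧
    f N1 = ((T : ℝ) + 1 - N2 - N1) * ((T : ℝ) + 1 - N1)
      + ((T : ℝ) + 1 - N2 - j) * ((N1 : ℝ) - j) :=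
  stmt1_general T N1 N2 j hjN hpos k hk f hf
end

section
/- Let n, m, G, P be positive integers and consider GP symbols arranged in groups g_1, …, g_G each of size P, transmitted in order (all of g_1, then g_2, etc.) and partitioned into consecutive packets, each packet containing at most P symbols. If w packets are erased, then for every index p with 1 ≤ p ≤ P, at most w of the symbols g_1[p], g_2[p], …, g_G[p] are erased. -/
/-!
Two symbols in the same packet lie in a run of consecutive symbols that all belong to that
packet, because the packet map is monotone; so they are fewer than `P` positions apart.
The symbols `g_1[p], …, g_G[p]` are exactly `P` positions apart, hence lie in pairwise
distinct packets, and `w` erased packets erase at most `w` of them.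
-/

open Finset

theorem Monotone.apply_eq_of_mem_Icc {α β : Type*} [Preorder α] [PartialOrder β] {f : α → β}
    (hf : Monotone f) {a b x : α} (hab : f a = f b) (hx : x ∈ Set.Icc a b) : f x = f a :=
  le_antisymm (hab ▸ hf hx.2) (hf hx.1)

theorem Monotone.lt_add_of_apply_eq {pkt : ℕ → ℕ} (hmono : Monotone pkt) {N P : ℕ}
    (hsize : ∀ c, #{x ∈ Icc 1 N | pkt x = c} ≤ P) {x y : ℕ} (hx : 1 ≤ x) (hy : y ≤ N)
    (hxy : x ≤ y) (h : pkt x = pkt y) : y < x + P := by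
  have hrun : Icc x y ⊆ {z ∈ Icc 1 N | pkt z = pkt x} := fun z hz => by
    rw [mem_Icc] at hz
    exact mem_filter.mpr ⟨mem_Icc.mpr ⟨hx.trans hz.1, hz.2.trans hy⟩,
      hmono.apply_eq_of_mem_Icc h hz⟩
  have := (card_le_card hrun).trans (hsize (pkt x))
  rw [Nat.card_Icc] at this
  omega

theorem Monotone.injOn_sub_one_mul_add {pkt : ℕ → ℕ} (hmono : Monotone pkt) {G P : ℕ}
    (hsize : ∀ c, #{x ∈ Icc 1 (G * P) | pkt x = c} ≤ P) {p : ℕ} (hp1 : 1 ≤ p) (hpP : p ≤ P) :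
    Set.InjOn (fun r => pkt ((r - 1) * P + p)) (Icc 1 G) := by
  have hle : ∀ r ∈ Icc 1 G, ∀ r' ∈ Icc 1 G,
      pkt ((r - 1) * P + p) = pkt ((r' - 1) * P + p) → r' ≤ r := by
    intro r hr r' hr' h
    rw [mem_Icc] at hr hr'
    by_contra! hrr'
    have hgap : (r + 1) * P ≤ r' * P := Nat.mul_le_mul_right P hrr'
    have hend : r' * P ≤ G * P := Nat.mul_le_mul_right P hr'.2
    have hstart : P ≤ r * P := Nat.le_mul_of_pos_left P hr.1
    rw [Nat.sub_one_mul, Nat.sub_one_mul] at h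
    rw [add_one_mul] at hgap
    have := hmono.lt_add_of_apply_eq hsize (by omega) (by omega) (by omega) h
    omega
  exact fun r hr r' hr' h => le_antisymm (hle r' hr' r hr h.symm) (hle r hr r' hr' h)

theorem stmt5_general (G P : ℕ)
    (pkt : ℕ → ℕ) (hmono : Monotone pkt)
    (hsize : ∀ c : ℕ, ((Finset.Icc 1 (G * P)).filter (fun x => pkt x = c)).card ≤ P)
    (E : Finset ℕ) (w : ℕ) (hE : E.card ≤ w) :
    ∀ p : ℕ, 1 ≤ p → p ≤ P →
      ((Finset.Icc 1 G).filter (fun r => pkt ((r - 1) * P + p) ∈ E)).card ≤ w := by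
  intro p hp1 hpP
  calc #{r ∈ Icc 1 G | pkt ((r - 1) * P + p) ∈ E}
      ≤ #E := card_le_card_of_injOn _ (fun r hr => (mem_filter.mp hr).2)
        ((hmono.injOn_sub_one_mul_add hsize hp1 hpP).mono (filter_subset _ _))
    _ ≤ w := hE

/-- G·P symbols in G ordered groups of size P (symbol g_r[p] sits
at position (r-1)·P + p), transmitted in order and partitioned into consecutive
packets (packet assignment `pkt` is monotone and each packet contains at most P
symbols).  If at most w packets are erased, then for every within-group index p,
at most w of the symbols g_1[p], …, g_G[p] are erased. -/
theorem stmt5 (n m G P : ℕ) (hn : 0 < n) (hm : 0 < m) (hG : 0 < G) (hP : 0 < P)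
    (pkt : ℕ → ℕ) (hmono : Monotone pkt)
    (hsize : ∀ c : ℕ, ((Finset.Icc 1 (G * P)).filter (fun x => pkt x = c)).card ≤ P)
    (E : Finset ℕ) (w : ℕ) (hE : E.card ≤ w) :
    ∀ p : ℕ, 1 ≤ p → p ≤ P →
      ((Finset.Icc 1 G).filter (fun r => pkt ((r - 1) * P + p) ∈ E)).card ≤ w :=
  stmt5_general G P pkt hmono hsize E w hE
end
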